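/- Let α be a nonnegative integer, β > −1 a real number, and i an integer with i > 2α+4. Then b_i(α,β,x) = 0 for all real x. -/

import Mathlib

/-- The Pochhammer symbol (rising factorial) `(a)_k = a (a+1) ⋯ (a+k-1)`. -/
noncomputable def poch (a : ℝ) (k : ℕ) : ℝ := (ascPochhammer ℝ k).eval a

/-- The coefficient `b_i(α,β,x)` of the differential equation:
`b_i(α,β,x) = (α+β+2) (−2)^i Σ_{ℓ=0}^{i−1} [(α+3)_{i−ℓ−1} (−α−2)_{i−ℓ−1} /`
`((β+1)_{i−ℓ−1} (i−ℓ)! (i−ℓ−1)! ℓ!)] ₃F₂(−ℓ,α+β+3,α+i−ℓ+2;β+i−ℓ,i−ℓ+1;1) ((x−1)/2)^{ℓ+1}`. -/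
noncomputable def bCoef (α β : ℝ) (i : ℕ) (x : ℝ) : ℝ :=
  (α + β + 2) * (-2 : ℝ) ^ i *
    ∑ ℓ ∈ Finset.range i,
      poch (α + 3) (i - ℓ - 1) * poch (-α - 2) (i - ℓ - 1) /
        (poch (β + 1) (i - ℓ - 1) * Nat.factorial (i - ℓ) * Nat.factorial (i - ℓ - 1) *
          Nat.factorial ℓ) *
      (∑ m ∈ Finset.range (ℓ + 1),
        poch (-(ℓ : ℝ)) m * poch (α + β + 3) m * poch (α + (i : ℝ) - (ℓ : ℝ) + 2) m /
          (poch (β + (i : ℝ) - (ℓ : ℝ)) m * poch ((i : ℝ) - (ℓ : ℝ) + 1) m *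
            Nat.factorial m)) *
      ((x - 1) / 2) ^ (ℓ + 1)

/-! In the inner sum of `b_i` the upper parameters `α+β+3`, `α+i-ℓ+2` exceed the lower ones
`c = β+i-ℓ`, `d = i-ℓ+1` by the integers `q = α+3-(i-ℓ)` and `N = α+1`. Since
`(c+q)_m / (c)_m = (c+m)_q / (c)_q`, its `m`-th term is `(-1)^m C(ℓ,m) P(m)` up to a factor
independent of `m`, with `P` a polynomial of degree `q + N`. That alternating sum is the `ℓ`-th
forward difference of `P`, which vanishes when `ℓ > q + N`, i.e. when `i > 2α + 4`. When `q < 0`,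
i.e. `i - ℓ ≥ α + 4`, the prefactor `(-α-2)_{i-ℓ-1}` vanishes instead. -/

open Finset Polynomial

theorem Polynomial.sum_range_neg_one_pow_mul_choose_mul_eval_eq_zero {R : Type*} [CommRing R]
    {P : R[X]} {ℓ : ℕ} (hP : P.natDegree < ℓ) :
    ∑ m ∈ range (ℓ + 1), (-1) ^ m * (ℓ.choose m : R) * P.eval (m : R) = 0 := by
  have h := congr_fun (P.fwdDiff_iter_eq_zero_of_degree_lt hP) 0
  rw [fwdDiff_iter_eq_sum_shift] at h
  calc ∑ m ∈ range (ℓ + 1), (-1) ^ m * (ℓ.choose m : R) * P.eval (m : R)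
      = (-1) ^ ℓ * ∑ m ∈ range (ℓ + 1),
          ((-1 : ℤ) ^ (ℓ - m) * ℓ.choose m) • P.eval (0 + m • (1 : R)) := by
        rw [mul_sum]
        refine sum_congr rfl fun m hm => ?_
        obtain ⟨j, rfl⟩ := Nat.exists_eq_add_of_le (Nat.lt_succ_iff.mp (mem_range.mp hm))
        have hsq : ((-1 : R) ^ j) ^ 2 = 1 := by
          rw [← pow_mul, mul_comm, pow_mul, neg_one_sq, one_pow]
        simp only [Nat.add_sub_cancel_left, zsmul_eq_mul, nsmul_eq_mul, pow_add, zero_add,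
          mul_one]
        push_cast
        linear_combination -(-1) ^ m * ((m + j).choose m : R) * P.eval (m : R) * hsq
    _ = 0 := by rw [h, Pi.zero_apply, mul_zero]

theorem Polynomial.natDegree_ascPochhammer_comp_X_add_C {R : Type*} [CommRing R] [IsDomain R]
    (c : R) (q : ℕ) : ((ascPochhammer R q).comp (X + C c)).natDegree = q := by
  rw [natDegree_comp, ascPochhammer_natDegree, natDegree_X_add_C, mul_one]

theorem poch_add (a : ℝ) (s t : ℕ) : poch a (s + t) = poch a s * poch (a + s) t := by
  simp only [poch, ← ascPochhammer_mul, eval_mul, eval_comp, eval_add, eval_X, eval_natCast]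

theorem poch_add_natCast_mul (c : ℝ) (q m : ℕ) :
    poch (c + q) m * poch c q = poch c m * poch (c + m) q := by
  rw [mul_comm, ← poch_add, ← poch_add, add_comm]

theorem poch_neg_natCast (ℓ m : ℕ) :
    poch (-ℓ) m = (-1) ^ m * (m.factorial * ℓ.choose m) := by
  rw [poch, ascPochhammer_eval_neg_eq_descPochhammer, descPochhammer_eval_eq_descFactorial,
    Nat.descFactorial_eq_factorial_mul_choose]
  push_cast
  rfl

theorem sum_poch_neg_natCast_eq_zero {c d : ℝ} (hc : 0 < c) (hd : 0 < d) {q N ℓ : ℕ}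
    (hℓ : q + N < ℓ) :
    ∑ m ∈ range (ℓ + 1), poch (-ℓ) m * poch (c + q) m * poch (d + N) m /
      (poch c m * poch d m * m.factorial) = 0 := by
  set P : ℝ[X] := (ascPochhammer ℝ q).comp (X + C c) * (ascPochhammer ℝ N).comp (X + C d)
  have hP : P.natDegree < ℓ := by
    refine natDegree_mul_le.trans_lt ?_
    rwa [natDegree_ascPochhammer_comp_X_add_C, natDegree_ascPochhammer_comp_X_add_C]
  have hPeval (m : ℕ) : P.eval (m : ℝ) = poch (c + m) q * poch (d + m) N := by
    simp [P, poch, eval_comp, add_comm]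
  have hterm (m : ℕ) : poch (-ℓ) m * poch (c + q) m * poch (d + N) m /
      (poch c m * poch d m * m.factorial)
        = (-1) ^ m * (ℓ.choose m : ℝ) * P.eval (m : ℝ) / (poch c q * poch d N) := by
    have hcm : poch c m ≠ 0 := (ascPochhammer_pos m c hc).ne'
    have hdm : poch d m ≠ 0 := (ascPochhammer_pos m d hd).ne'
    have hcq : poch c q ≠ 0 := (ascPochhammer_pos q c hc).ne'
    have hdN : poch d N ≠ 0 := (ascPochhammer_pos N d hd).ne'
    rw [hPeval, poch_neg_natCast]
    field_simp
    linear_combination (ℓ.choose m : ℝ) *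
      (poch (d + N) m * poch d N * poch_add_natCast_mul c q m +
        poch c m * poch (c + m) q * poch_add_natCast_mul d N m)
  rw [sum_congr rfl fun m _ => hterm m, ← sum_div,
    sum_range_neg_one_pow_mul_choose_mul_eval_eq_zero hP, zero_div]

/-- for a nonnegative integer `α` the coefficients `b_i(α,β,x)`
vanish for `i > 2α+4`. -/
theorem bCoef_eq_zero_of_gt (α : ℕ) (β : ℝ) (hβ : -1 < β) (i : ℕ) (hi : 2 * α + 4 < i)
    (x : ℝ) : bCoef (α : ℝ) β i x = 0 := by
  rw [bCoef, sum_eq_zero, mul_zero]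
  intro ℓ hℓ
  obtain ⟨n, rfl⟩ : ∃ n, i = ℓ + n + 1 := ⟨i - ℓ - 1, by grind⟩
  rw [show ℓ + n + 1 - ℓ - 1 = n by omega, show ℓ + n + 1 - ℓ = n + 1 by omega]
  rcases lt_or_ge (α + 2) n with hn | hn
  · have hpoch : poch (-α - 2) n = 0 := by
      simpa [poch, neg_sub_left, add_comm] using
        ascPochhammer_eval_neg_coe_nat_of_lt (R := ℝ) hn
    rw [hpoch, mul_zero, zero_div, zero_mul, zero_mul]
  · have hinner := sum_poch_neg_natCast_eq_zero (c := β + (n + 1)) (d := n + 2)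
      (q := α + 2 - n) (N := α + 1) (ℓ := ℓ) (by linarith) (by positivity) (by omega)
    refine mul_eq_zero_of_left (mul_eq_zero_of_right _ ?_) _
    rw [← hinner]
    push_cast [Nat.cast_sub hn]
    ring_nf
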